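/- arXiv:2601.17068 — 3 statements merged into one kernel-verified Lean document; each statement's English description precedes it below -/
import Mathlib

section
/- Let k be a real number and g : ℝ → ℂ a differentiable function. Define H(x) := e^{x}·g(−x). Then for every x ≠ 0 one has the exact identity (T^k H)(x) = e^{x}·( g(−x) − (T^k g)(−x) ), where both sides are evaluated using the Cherednik operator. -/
open Complex

/-- The Cherednik operator `T^k` of rank one, acting on functions `g : ℝ → ℂ`. -/
noncomputable def cherednik (k : ℝ) (g : ℝ → ℂ) (x : ℝ) : ℂ :=
  deriv g x + 2 * (k : ℂ) * (g x - g (-x)) / (1 - Complex.exp (-2 * (x : ℂ)))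
    - (k : ℂ) * g x

/-!
Write `E = e^x`. The derivative of `H` at `x` is `E (g(-x) - g'(-x))`, and `H(-x) = E⁻¹ g(x)`,
so after dividing by `2k` the two sides differ by a rational identity in `E`, whose
denominators `1 - E⁻²` and `1 - E²` are nonzero because `x ≠ 0`.
-/

theorem deriv_exp_mul_comp_neg {g : ℝ → ℂ} {x : ℝ} (hg : DifferentiableAt ℝ g (-x)) :
    deriv (fun y : ℝ => exp (y : ℂ) * g (-y)) x = exp (x : ℂ) * (g (-x) - deriv g (-x)) := by
  rw [deriv_fun_mul (hasDerivAt_exp (x : ℂ)).comp_ofReal.differentiableAt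
    (differentiableAt_comp_neg.mpr hg), (hasDerivAt_exp (x : ℂ)).comp_ofReal.deriv,
    deriv_comp_neg]
  ring

theorem exp_ofReal_sq_ne_one {x : ℝ} (hx : x ≠ 0) : exp (x : ℂ) ^ 2 ≠ 1 := by
  rw [← exp_nat_mul, ← ofReal_natCast, ← ofReal_mul, ← ofReal_exp]
  exact_mod_cast fun h => hx (by simpa using Real.exp_eq_one_iff _ |>.mp h)

theorem div_one_sub_inv_sq_eq {E a b : ℂ} (hE : E ≠ 0) (hE2 : E ^ 2 ≠ 1) :
    (E * a - E⁻¹ * b) / (1 - E⁻¹ ^ 2) = E * (a - (a - b) / (1 - E ^ 2)) := by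
  have : 1 - E ^ 2 ≠ 0 := sub_ne_zero.mpr (Ne.symm hE2)
  have : E ^ 2 - 1 ≠ 0 := sub_ne_zero.mpr hE2
  field_simp
  ring

theorem cherednik_tilted_reflection (k : ℝ) (g : ℝ → ℂ) (hg : Differentiable ℝ g)
    (H : ℝ → ℂ) (hH : ∀ x : ℝ, H x = Complex.exp (x : ℂ) * g (-x)) :
    ∀ x : ℝ, x ≠ 0 →
      cherednik k H x = Complex.exp (x : ℂ) * (g (-x) - cherednik k g (-x)) := by
  obtain rfl : H = fun y : ℝ => exp (y : ℂ) * g (-y) := funext hH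
  intro x hx
  have hexp_neg : exp (-(x : ℂ)) = (exp (x : ℂ))⁻¹ := exp_neg _
  have hexp_two_mul : ∀ z : ℂ, exp (-2 * z) = exp (-z) ^ 2 := fun z => by
    rw [← exp_nat_mul]; ring_nf
  have key := div_one_sub_inv_sq_eq (a := g (-x)) (b := g x) (exp_ne_zero _)
    (exp_ofReal_sq_ne_one hx)
  simp only [cherednik, deriv_exp_mul_comp_neg (hg (-x)), ofReal_neg, neg_neg,
    hexp_two_mul, hexp_neg]
  linear_combination (2 * (k : ℂ)) * key
end

section
/- Let k be a real number, λ ∈ ℂ, and g : ℝ → ℂ a differentiable function satisfying (T^k g)(x) = λ·g(x) for all x ≠ 0. Then the tilted reflection H(x) := e^{x}·g(−x) satisfies (T^k H)(x) = (1 − λ)·H(x) for all x ≠ 0. -/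
open Complex

/-
The tilted reflection `H(x) = eˣ g(−x)` satisfies, for every differentiable `g` and every `x ≠ 0`,
the pointwise identity `(T^k H)(x) = H(x) − eˣ (T^k g)(−x)`: the difference quotients of `H` and
of `g` at `x` and `−x` combine, via `1 − e^{2x} = −e^{2x}(1 − e^{−2x})`, into exactly `2k H(x)`,
which cancels the `−k` terms, while the product rule supplies the leftover `H(x)`.
Substituting the eigenvalue equation of `g` at `−x` gives the eigenvalue `1 − λ` for `H`.
-/

theorem one_sub_exp_neg_two_mul_ne_zero {x : ℝ} (hx : x ≠ 0) :
    1 - exp (-2 * (x : ℂ)) ≠ 0 := by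
  rw [sub_ne_zero, ne_comm, ← ofReal_ofNat, ← ofReal_neg, ← ofReal_mul, ← ofReal_exp,
    ← ofReal_one, ofReal_inj.ne, Ne, Real.exp_eq_one_iff]
  simpa using hx

theorem hasDerivAt_exp_mul_comp_neg {g : ℝ → ℂ} {x : ℝ} (hg : DifferentiableAt ℝ g (-x)) :
    HasDerivAt (fun y : ℝ => exp y * g (-y)) (exp x * g (-x) - exp x * deriv g (-x)) x := by
  have hexp : HasDerivAt (fun y : ℝ => exp (y : ℂ)) (exp x) x := by
    simpa using (hasDerivAt_exp (x : ℂ)).comp_ofReal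
  have hrefl : HasDerivAt (fun y : ℝ => g (-y)) (-deriv g (-x)) x := by
    rw [← deriv_comp_neg]
    exact (differentiableAt_comp_neg.2 hg).hasDerivAt
  simpa only [mul_neg, sub_eq_add_neg] using hexp.fun_mul hrefl

theorem cherednik_exp_mul_comp_neg (k : ℝ) {g : ℝ → ℂ} {x : ℝ} (hg : DifferentiableAt ℝ g (-x))
    (hx : x ≠ 0) :
    cherednik k (fun y : ℝ => exp y * g (-y)) x = exp x * g (-x) - exp x * cherednik k g (-x) := by
  have e₁ : exp (-2 * (x : ℂ)) = (exp x)⁻¹ ^ 2 := by rw [← exp_neg, ← exp_nat_mul]; ring_nf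
  have e₂ : exp (-2 * ((-x : ℝ) : ℂ)) = exp x ^ 2 := by rw [← exp_nat_mul]; push_cast; ring_nf
  have e₃ : exp ((-x : ℝ) : ℂ) = (exp x)⁻¹ := by rw [← exp_neg]; push_cast; rfl
  have hd : 1 - (exp (x : ℂ))⁻¹ ^ 2 ≠ 0 := e₁ ▸ one_sub_exp_neg_two_mul_ne_zero hx
  have hd' : 1 - exp (x : ℂ) ^ 2 ≠ 0 := e₂ ▸ one_sub_exp_neg_two_mul_ne_zero (neg_ne_zero.2 hx)
  have hd'' : exp (x : ℂ) ^ 2 - 1 ≠ 0 := by rwa [← neg_sub, neg_ne_zero]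
  simp only [cherednik, (hasDerivAt_exp_mul_comp_neg hg).deriv, e₁, e₂, e₃, neg_neg]
  field_simp
  ring

theorem cherednik_reflection_eigenfunction (k : ℝ) (lam : ℂ) (g : ℝ → ℂ)
    (hg : Differentiable ℝ g)
    (heig : ∀ x : ℝ, x ≠ 0 → cherednik k g x = lam * g x)
    (H : ℝ → ℂ) (hH : ∀ x : ℝ, H x = Complex.exp (x : ℂ) * g (-x)) :
    ∀ x : ℝ, x ≠ 0 → cherednik k H x = (1 - lam) * H x := by
  intro x hx
  rw [funext hH, cherednik_exp_mul_comp_neg k (hg (-x)) hx, heig (-x) (neg_ne_zero.2 hx)]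
  ring
end

section
/- Let k be a real number and g : ℝ → ℂ a differentiable function. Then for every x ≠ 0, the reflected function g∘neg (i.e. x ↦ g(−x)) satisfies (T^k (g∘neg))(x) = −(T^k g)(−x) − 2k·g(x). -/
open Complex

theorem one_div_one_sub_add_one_div_one_sub_inv {K : Type*} [Field K] {a : K}
    (ha₀ : a ≠ 0) (ha₁ : a ≠ 1) : 1 / (1 - a) + 1 / (1 - a⁻¹) = 1 := by
  have h₁ : 1 - a ≠ 0 := sub_ne_zero.mpr (Ne.symm ha₁)
  have h₂ : a - 1 ≠ 0 := sub_ne_zero.mpr ha₁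
  field_simp
  ring

theorem Complex.exp_neg_two_mul_ofReal_ne_one {x : ℝ} (hx : x ≠ 0) :
    exp (-2 * (x : ℂ)) ≠ 1 := by
  rw [← ofReal_ofNat, ← ofReal_neg, ← ofReal_mul, ← ofReal_exp, ofReal_ne_one]
  exact fun h => hx (by simpa using Real.exp_eq_one_iff _ |>.mp h)

theorem cherednik_reflected_general (k : ℝ) (g : ℝ → ℂ) :
    ∀ x : ℝ, x ≠ 0 →
      cherednik k (fun t => g (-t)) x = -(cherednik k g (-x)) - 2 * (k : ℂ) * g x := by
  intro x hx
  set a := exp (-2 * (x : ℂ))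
  have ha₀ : a ≠ 0 := exp_ne_zero _
  have ha₁ : a ≠ 1 := exp_neg_two_mul_ofReal_ne_one hx
  have h_neg : exp (-2 * ((-x : ℝ) : ℂ)) = a⁻¹ := by
    rw [← exp_neg]; congr 1; push_cast; ring
  -- Reflection turns `a` into `a⁻¹`, so by `key` the two difference-quotient terms
  -- combine to `2k·(g(-x) - g(x))`.
  have key := one_div_one_sub_add_one_div_one_sub_inv ha₀ ha₁
  simp only [cherednik, deriv_comp_neg, neg_neg, h_neg]
  linear_combination (2 * (k : ℂ) * (g (-x) - g x)) * key

theorem cherednik_reflected (k : ℝ) (g : ℝ → ℂ) (hg : Differentiable ℝ g) :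
    ∀ x : ℝ, x ≠ 0 →
      cherednik k (fun t => g (-t)) x = -(cherednik k g (-x)) - 2 * (k : ℂ) * g x :=
  cherednik_reflected_general k g
end
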